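/- Lipschitzianity of the nonlocal energy: Given 0 < ᾱ < N-1 and m > 0, there exists a constant c₀ = c₀(N, ᾱ, m) such that for all measurable sets E, F ⊆ ℝ^N with |E|, |F| ≤ m and all α ≤ ᾱ, one has |NL_α(E) − NL_α(F)| ≤ c₀ |E △ F|, where NL_α(E) := ∫_E ∫_E |x−y|^{−α} dx dy and △ denotes symmetric difference. -/
import Mathlib


open MeasureTheory Metric

/-- The Riesz interaction energy `NL_α(E)` (real-valued double integral). -/
noncomputable def rieszEnergyR (N : ℕ) (α : ℝ) (E : Set (EuclideanSpace ℝ (Fin N))) : ℝ :=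
  ∫ x in E, ∫ y in E, ‖x - y‖ ^ (-α)

open Set ENNReal

/-- Finiteness of the Riesz integral over the unit ball, for exponent `a < N`. -/
private lemma ballIntegralFinite {N : ℕ} {a : ℝ} (ha : 0 < a) (haN : a < N) :
    ∫⁻ z in ball (0 : EuclideanSpace ℝ (Fin N)) 1, ENNReal.ofReal (‖z‖ ^ (-a)) < ⊤ := by
  set V := volume (ball (0 : EuclideanSpace ℝ (Fin N)) 1) with hVdef
  have hVlt : V < ⊤ := measure_ball_lt_top
  set b : ℝ := (2 : ℝ) ^ a with hbdef
  have hb0 : 0 < b := Real.rpow_pos_of_pos two_pos a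
  set q : ℝ := (2⁻¹ : ℝ) ^ N with hqdef
  have hq0 : 0 < q := by positivity
  have hbq0 : 0 ≤ b * q := by positivity
  have hbq1 : b * q < 1 := by
    have h2N : (2 : ℝ) ^ (N : ℕ) * q = 1 := by
      rw [hqdef, ← mul_pow]; norm_num
    have hblt : b < (2 : ℝ) ^ (N : ℕ) := by
      rw [hbdef, ← Real.rpow_natCast (2 : ℝ) N]
      exact Real.rpow_lt_rpow_of_exponent_lt one_lt_two haN
    calc b * q < (2 : ℝ) ^ (N : ℕ) * q := by gcongr
      _ = 1 := h2N
  set A : ℕ → Set (EuclideanSpace ℝ (Fin N)) :=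
    fun n => closedBall (0 : EuclideanSpace ℝ (Fin N)) ((2⁻¹ : ℝ) ^ n)
      \ ball (0 : EuclideanSpace ℝ (Fin N)) ((2⁻¹ : ℝ) ^ (n + 1)) with hAdef
  have hsub : ball (0 : EuclideanSpace ℝ (Fin N)) 1 ⊆ {0} ∪ ⋃ n, A n := by
    intro z hz
    rcases eq_or_ne z 0 with rfl | hz0
    · exact Or.inl rfl
    right
    have hz1 : ‖z‖ < 1 := mem_ball_zero_iff.mp hz
    have hzpos : 0 < ‖z‖ := norm_pos_iff.mpr hz0
    have hex : ∃ n : ℕ, (2⁻¹ : ℝ) ^ n < ‖z‖ := exists_pow_lt_of_lt_one hzpos (by norm_num)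
    classical
    have hfind := Nat.find_spec hex
    have hne : Nat.find hex ≠ 0 := by
      intro h
      rw [h, pow_zero] at hfind
      exact absurd hfind (not_lt.mpr hz1.le)
    obtain ⟨n, hn⟩ := Nat.exists_eq_succ_of_ne_zero hne
    refine mem_iUnion.mpr ⟨n, ?_, ?_⟩
    · have hmin : ¬ ((2⁻¹ : ℝ) ^ n < ‖z‖) := Nat.find_min hex (by omega)
      exact mem_closedBall_zero_iff.mpr (not_lt.mp hmin)
    · rw [hn] at hfind
      intro hball
      exact absurd (mem_ball_zero_iff.mp hball) (not_lt.mpr hfind.le)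
  have hterm : ∀ n : ℕ, ∫⁻ z in A n, ENNReal.ofReal (‖z‖ ^ (-a)) ≤
      ENNReal.ofReal (b * (b * q) ^ n) * V := by
    intro n
    have hmeasA : MeasurableSet (A n) := measurableSet_closedBall.diff measurableSet_ball
    have hpt : ∀ z ∈ A n, ENNReal.ofReal (‖z‖ ^ (-a)) ≤ ENNReal.ofReal (b ^ (n + 1)) := by
      intro z hz
      have hlow : (2⁻¹ : ℝ) ^ (n + 1) ≤ ‖z‖ := by
        have h2 := hz.2
        rw [mem_ball_zero_iff] at h2
        · exact le_of_not_gt (by simpa using hz.2)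
      have hpow : ‖z‖ ^ (-a) ≤ ((2⁻¹ : ℝ) ^ (n + 1)) ^ (-a) :=
        Real.rpow_le_rpow_of_nonpos (by positivity) hlow (neg_nonpos.mpr ha.le)
      have heq : ((2⁻¹ : ℝ) ^ (n + 1)) ^ (-a) = b ^ (n + 1) := by
        rw [hbdef, ← Real.rpow_natCast (2⁻¹ : ℝ) (n + 1),
          ← Real.rpow_natCast ((2 : ℝ) ^ a) (n + 1),
          ← Real.rpow_mul (by norm_num : (0:ℝ) ≤ 2⁻¹),
          ← Real.rpow_mul (by norm_num : (0:ℝ) ≤ 2),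
          Real.inv_rpow (by norm_num : (0:ℝ) ≤ 2),
          ← Real.rpow_neg (by norm_num : (0:ℝ) ≤ 2)]
        ring_nf
      exact ENNReal.ofReal_le_ofReal (heq ▸ hpow)
    have hA_vol : volume (A n) ≤ ENNReal.ofReal (q ^ n) * V := by
      calc volume (A n)
          ≤ volume (closedBall (0 : EuclideanSpace ℝ (Fin N)) ((2⁻¹ : ℝ) ^ n)) :=
            measure_mono diff_subset
        _ = ENNReal.ofReal (((2⁻¹ : ℝ) ^ n) ^ Module.finrank ℝ (EuclideanSpace ℝ (Fin N))) * V :=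
            Measure.addHaar_closedBall _ _ (by positivity)
        _ = ENNReal.ofReal (q ^ n) * V := by
            rw [finrank_euclideanSpace_fin, hqdef, ← pow_mul, ← pow_mul, Nat.mul_comm]
    calc ∫⁻ z in A n, ENNReal.ofReal (‖z‖ ^ (-a))
        ≤ ∫⁻ _ in A n, ENNReal.ofReal (b ^ (n + 1)) := setLIntegral_mono' hmeasA hpt
      _ = ENNReal.ofReal (b ^ (n + 1)) * volume (A n) := setLIntegral_const _ _
      _ ≤ ENNReal.ofReal (b ^ (n + 1)) * (ENNReal.ofReal (q ^ n) * V) := by gcongr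
      _ = ENNReal.ofReal (b * (b * q) ^ n) * V := by
          rw [← mul_assoc, ← ENNReal.ofReal_mul (by positivity)]
          congr 2
          ring
  calc ∫⁻ z in ball (0 : EuclideanSpace ℝ (Fin N)) 1, ENNReal.ofReal (‖z‖ ^ (-a))
      ≤ ∫⁻ z in ({0} ∪ ⋃ n, A n : Set (EuclideanSpace ℝ (Fin N))),
          ENNReal.ofReal (‖z‖ ^ (-a)) := lintegral_mono_set hsub
    _ ≤ (∫⁻ z in ({0} : Set (EuclideanSpace ℝ (Fin N))), ENNReal.ofReal (‖z‖ ^ (-a)))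
        + ∫⁻ z in ⋃ n, A n, ENNReal.ofReal (‖z‖ ^ (-a)) := lintegral_union_le _ _ _
    _ = ∫⁻ z in ⋃ n, A n, ENNReal.ofReal (‖z‖ ^ (-a)) := by
        rw [lintegral_singleton, norm_zero, Real.zero_rpow (neg_ne_zero.mpr ha.ne'),
          ENNReal.ofReal_zero, zero_mul, zero_add]
    _ ≤ ∑' n, ∫⁻ z in A n, ENNReal.ofReal (‖z‖ ^ (-a)) := lintegral_iUnion_le _ _
    _ ≤ ∑' n, ENNReal.ofReal (b * (b * q) ^ n) * V := ENNReal.tsum_le_tsum hterm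
    _ < ⊤ := by
        rw [ENNReal.tsum_mul_right,
          ← ENNReal.ofReal_tsum_of_nonneg (fun n => by positivity)
            ((summable_geometric_of_lt_one hbq0 hbq1).mul_left b)]
        exact ENNReal.mul_lt_top ENNReal.ofReal_lt_top hVlt


private lemma potential_bound {N : ℕ} {abar : ℝ} (h1 : 0 < abar) {α : ℝ} (hα : 0 < α)
    (hle : α ≤ abar) {M : ℝ} {A : Set (EuclideanSpace ℝ (Fin N))} (hmA : MeasurableSet A)
    (hA : volume A ≤ ENNReal.ofReal M) (x : EuclideanSpace ℝ (Fin N)) :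
    ∫⁻ y in A, ENNReal.ofReal (‖x - y‖ ^ (-α)) ≤
      (∫⁻ z in ball (0 : EuclideanSpace ℝ (Fin N)) 1, ENNReal.ofReal (‖z‖ ^ (-abar)))
        + ENNReal.ofReal M := by
  set I := ∫⁻ z in ball (0 : EuclideanSpace ℝ (Fin N)) 1, ENNReal.ofReal (‖z‖ ^ (-abar)) with hI
  have part1 : ∫⁻ y in A ∩ ball x 1, ENNReal.ofReal (‖x - y‖ ^ (-α)) ≤ I := by
    have hmono : ∀ y ∈ A ∩ ball x 1,
        ENNReal.ofReal (‖x - y‖ ^ (-α)) ≤ ENNReal.ofReal (‖x - y‖ ^ (-abar)) := by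
      intro y hy
      apply ENNReal.ofReal_le_ofReal
      rcases eq_or_lt_of_le (norm_nonneg (x - y)) with h0 | h0
      · rw [← h0, Real.zero_rpow (neg_ne_zero.mpr hα.ne'),
          Real.zero_rpow (neg_ne_zero.mpr h1.ne')]
      · have hlt1 : ‖x - y‖ < 1 := by
          have h2 := hy.2
          rw [mem_ball, dist_eq_norm] at h2
          calc ‖x - y‖ = ‖y - x‖ := norm_sub_rev _ _
            _ < 1 := h2
        exact Real.rpow_le_rpow_of_exponent_ge h0 hlt1.le (neg_le_neg hle)
    have hcov : ∀ y : EuclideanSpace ℝ (Fin N),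
        Set.indicator (ball x 1) (fun y => ENNReal.ofReal (‖x - y‖ ^ (-abar))) y
          = Set.indicator (ball (0 : EuclideanSpace ℝ (Fin N)) 1)
              (fun z => ENNReal.ofReal (‖z‖ ^ (-abar))) (x - y) := by
      intro y
      by_cases hy : y ∈ ball x 1
      · have hxy : x - y ∈ ball (0 : EuclideanSpace ℝ (Fin N)) 1 := by
          rw [mem_ball, dist_eq_norm] at hy
          rw [mem_ball_zero_iff, norm_sub_rev]
          exact hy
        rw [Set.indicator_of_mem hy, Set.indicator_of_mem hxy]
      · have hxy : x - y ∉ ball (0 : EuclideanSpace ℝ (Fin N)) 1 := by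
          rw [mem_ball, dist_eq_norm] at hy
          rw [mem_ball_zero_iff, norm_sub_rev]
          exact hy
        rw [Set.indicator_of_notMem hy, Set.indicator_of_notMem hxy]
    have hmg : Measurable fun z : EuclideanSpace ℝ (Fin N) =>
        Set.indicator (ball (0 : EuclideanSpace ℝ (Fin N)) 1)
          (fun z => ENNReal.ofReal (‖z‖ ^ (-abar))) z := by
      apply Measurable.indicator ?_ measurableSet_ball
      apply Measurable.ennreal_ofReal
      fun_prop
    calc ∫⁻ y in A ∩ ball x 1, ENNReal.ofReal (‖x - y‖ ^ (-α))
        ≤ ∫⁻ y in A ∩ ball x 1, ENNReal.ofReal (‖x - y‖ ^ (-abar)) :=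
          setLIntegral_mono' (hmA.inter measurableSet_ball) hmono
      _ ≤ ∫⁻ y in ball x 1, ENNReal.ofReal (‖x - y‖ ^ (-abar)) :=
          lintegral_mono_set inter_subset_right
      _ = ∫⁻ y, Set.indicator (ball x 1)
            (fun y => ENNReal.ofReal (‖x - y‖ ^ (-abar))) y := by
          rw [lintegral_indicator measurableSet_ball]
      _ = ∫⁻ y, Set.indicator (ball (0 : EuclideanSpace ℝ (Fin N)) 1)
            (fun z => ENNReal.ofReal (‖z‖ ^ (-abar))) (x - y) := by
          exact lintegral_congr hcov
      _ = ∫⁻ z, Set.indicator (ball (0 : EuclideanSpace ℝ (Fin N)) 1)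
            (fun z => ENNReal.ofReal (‖z‖ ^ (-abar))) z :=
          (Measure.measurePreserving_sub_left volume x).lintegral_comp hmg
      _ = I := by rw [lintegral_indicator measurableSet_ball]
  have part2 : ∫⁻ y in A \ ball x 1, ENNReal.ofReal (‖x - y‖ ^ (-α)) ≤ ENNReal.ofReal M := by
    have hpt : ∀ y ∈ A \ ball x 1, ENNReal.ofReal (‖x - y‖ ^ (-α)) ≤ 1 := by
      intro y hy
      have h1y : 1 ≤ ‖x - y‖ := by
        have h2 := hy.2
        rw [mem_ball, dist_eq_norm] at h2
        rw [norm_sub_rev]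
        exact le_of_not_gt h2
      calc ENNReal.ofReal (‖x - y‖ ^ (-α)) ≤ ENNReal.ofReal 1 :=
          ENNReal.ofReal_le_ofReal
            (Real.rpow_le_one_of_one_le_of_nonpos h1y (neg_nonpos.mpr hα.le))
        _ = 1 := ENNReal.ofReal_one
    calc ∫⁻ y in A \ ball x 1, ENNReal.ofReal (‖x - y‖ ^ (-α))
        ≤ ∫⁻ _ in A \ ball x 1, 1 := setLIntegral_mono' (hmA.diff measurableSet_ball) hpt
      _ = volume (A \ ball x 1) := setLIntegral_one _
      _ ≤ volume A := measure_mono diff_subset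
      _ ≤ ENNReal.ofReal M := hA
  have hsplit : A ⊆ (A ∩ ball x 1) ∪ (A \ ball x 1) := by
    intro z hz
    by_cases h : z ∈ ball x 1
    · exact Or.inl ⟨hz, h⟩
    · exact Or.inr ⟨hz, h⟩
  calc ∫⁻ y in A, ENNReal.ofReal (‖x - y‖ ^ (-α))
      ≤ ∫⁻ y in (A ∩ ball x 1) ∪ (A \ ball x 1), ENNReal.ofReal (‖x - y‖ ^ (-α)) :=
        lintegral_mono_set hsplit
    _ ≤ (∫⁻ y in A ∩ ball x 1, ENNReal.ofReal (‖x - y‖ ^ (-α)))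
        + ∫⁻ y in A \ ball x 1, ENNReal.ofReal (‖x - y‖ ^ (-α)) := lintegral_union_le _ _ _
    _ ≤ I + ENNReal.ofReal M := add_le_add part1 part2


noncomputable def Jen (N : ℕ) (α : ℝ) (A B : Set (EuclideanSpace ℝ (Fin N))) : ℝ≥0∞ :=
  ∫⁻ x in A, ∫⁻ y in B, ENNReal.ofReal (‖x - y‖ ^ (-α))

private lemma kmeas (N : ℕ) (α : ℝ) :
    Measurable (fun p : EuclideanSpace ℝ (Fin N) × EuclideanSpace ℝ (Fin N) =>
      ENNReal.ofReal (‖p.1 - p.2‖ ^ (-α))) := by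
  apply Measurable.ennreal_ofReal
  fun_prop

private lemma innerMeas (N : ℕ) (α : ℝ) (B : Set (EuclideanSpace ℝ (Fin N))) :
    Measurable (fun x : EuclideanSpace ℝ (Fin N) =>
      ∫⁻ y in B, ENNReal.ofReal (‖x - y‖ ^ (-α))) :=
  Measurable.lintegral_prod_right' (kmeas N α)

private lemma Jen_mono (N : ℕ) (α : ℝ) {A A' B B' : Set (EuclideanSpace ℝ (Fin N))}
    (hA : A ⊆ A') (hB : B ⊆ B') : Jen N α A B ≤ Jen N α A' B' := by
  refine le_trans (lintegral_mono fun x => lintegral_mono_set hB) (lintegral_mono_set hA)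

private lemma Jen_split_left (N : ℕ) (α : ℝ) {A₁ A₂ B : Set (EuclideanSpace ℝ (Fin N))}
    (h2 : MeasurableSet A₂) (hd : Disjoint A₁ A₂) :
    Jen N α (A₁ ∪ A₂) B = Jen N α A₁ B + Jen N α A₂ B :=
  lintegral_union h2 hd

private lemma Jen_split_right (N : ℕ) (α : ℝ) {A B₁ B₂ : Set (EuclideanSpace ℝ (Fin N))}
    (h2 : MeasurableSet B₂) (hd : Disjoint B₁ B₂) :
    Jen N α A (B₁ ∪ B₂) = Jen N α A B₁ + Jen N α A B₂ := by
  unfold Jen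
  rw [lintegral_congr (fun x => lintegral_union h2 hd (f := fun y => ENNReal.ofReal (‖x - y‖ ^ (-α))))]
  exact lintegral_add_left (innerMeas N α B₁) _

private lemma Jen_swap (N : ℕ) (α : ℝ) (A B : Set (EuclideanSpace ℝ (Fin N))) :
    Jen N α A B = Jen N α B A := by
  unfold Jen
  rw [lintegral_lintegral_swap ((kmeas N α).aemeasurable)]
  refine lintegral_congr fun x => lintegral_congr fun y => ?_
  rw [norm_sub_rev]


/-- Lipschitzianity of the nonlocal energy with respect to the symmetric
difference, uniformly in `α ≤ ᾱ`. -/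
theorem rieszEnergy_lipschitz
    (N : ℕ) (hN : 2 ≤ N) (abar m : ℝ) (h1 : 0 < abar) (h2 : abar < (N : ℝ) - 1) (hm : 0 < m) :
    ∃ c₀ > 0, ∀ α : ℝ, 0 < α → α ≤ abar →
      ∀ E F : Set (EuclideanSpace ℝ (Fin N)), MeasurableSet E → MeasurableSet F →
        volume E ≤ ENNReal.ofReal m → volume F ≤ ENNReal.ofReal m →
        |rieszEnergyR N α E - rieszEnergyR N α F| ≤
          c₀ * (volume (symmDiff E F)).toReal := by
  have habarN : abar < (N : ℝ) := by linarith
  set I := ∫⁻ z in ball (0 : EuclideanSpace ℝ (Fin N)) 1, ENNReal.ofReal (‖z‖ ^ (-abar))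
    with hIdef
  have hIlt : I < ⊤ := ballIntegralFinite h1 habarN
  set Cenn : ℝ≥0∞ := I + ENNReal.ofReal (2 * m) with hCdef
  have hCtop : Cenn ≠ ⊤ := by
    rw [hCdef]
    exact ENNReal.add_ne_top.mpr ⟨hIlt.ne, ENNReal.ofReal_ne_top⟩
  have hCpos : 0 < Cenn.toReal := by
    have hle : ENNReal.ofReal (2 * m) ≤ Cenn := le_add_self
    have := ENNReal.toReal_mono hCtop hle
    rw [ENNReal.toReal_ofReal (by linarith)] at this
    linarith
  refine ⟨2 * Cenn.toReal, by linarith, ?_⟩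
  intro α hα hαle E F hmE hmF hE hF
  have hGvol : volume (E ∪ F) ≤ ENNReal.ofReal (2 * m) := by
    calc volume (E ∪ F) ≤ volume E + volume F := measure_union_le E F
      _ ≤ ENNReal.ofReal m + ENNReal.ofReal m := add_le_add hE hF
      _ = ENNReal.ofReal (2 * m) := by
          rw [← ENNReal.ofReal_add hm.le hm.le]; ring_nf
  -- uniform potential bound
  have hpot : ∀ B : Set (EuclideanSpace ℝ (Fin N)), MeasurableSet B →
      volume B ≤ ENNReal.ofReal (2 * m) →
      ∀ x, ∫⁻ y in B, ENNReal.ofReal (‖x - y‖ ^ (-α)) ≤ Cenn := by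
    intro B hB hBv x
    exact potential_bound h1 hα hαle hB hBv x
  have hJle : ∀ A B : Set (EuclideanSpace ℝ (Fin N)), MeasurableSet B → B ⊆ E ∪ F →
      Jen N α A B ≤ Cenn * volume A := by
    intro A B hB hBsub
    calc Jen N α A B ≤ ∫⁻ _ in A, Cenn :=
        lintegral_mono fun x => hpot B hB ((measure_mono hBsub).trans hGvol) x
      _ = Cenn * volume A := setLIntegral_const _ _
  -- NL = toReal of Jen
  have hNL : ∀ A : Set (EuclideanSpace ℝ (Fin N)), MeasurableSet A →
      volume A ≤ ENNReal.ofReal m → rieszEnergyR N α A = (Jen N α A A).toReal := by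
    intro A hmA hAv
    have hAv2 : volume A ≤ ENNReal.ofReal (2 * m) :=
      hAv.trans (ENNReal.ofReal_le_ofReal (by linarith))
    have hfin : ∀ x, (∫⁻ y in A, ENNReal.ofReal (‖x - y‖ ^ (-α))) ≠ ⊤ :=
      fun x => ((hpot A hmA hAv2 x).trans_lt (lt_top_iff_ne_top.mpr hCtop)).ne
    have hin : ∀ x : EuclideanSpace ℝ (Fin N), ∫ y in A, ‖x - y‖ ^ (-α)
        = (∫⁻ y in A, ENNReal.ofReal (‖x - y‖ ^ (-α))).toReal := by
      intro x
      rw [integral_eq_lintegral_of_nonneg_ae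
        (Filter.Eventually.of_forall fun y => Real.rpow_nonneg (norm_nonneg _) _)
        (Measurable.aestronglyMeasurable (by fun_prop))]
    unfold rieszEnergyR
    simp_rw [hin]
    rw [integral_eq_lintegral_of_nonneg_ae
      (Filter.Eventually.of_forall fun x => ENNReal.toReal_nonneg)
      ((innerMeas N α A).ennreal_toReal.aestronglyMeasurable)]
    unfold Jen
    congr 1
    refine lintegral_congr fun x => ?_
    rw [ENNReal.ofReal_toReal (hfin x)]
  -- one-sided estimate
  have main : ∀ P Q : Set (EuclideanSpace ℝ (Fin N)), MeasurableSet P → MeasurableSet Q →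
      P ∪ Q = E ∪ F →
      Jen N α P P ≤ Jen N α Q Q + Cenn * volume (P \ Q) + Cenn * volume (P \ Q) := by
    intro P Q hmP hmQ hPQ
    have hPsub : P ⊆ E ∪ F := hPQ ▸ subset_union_left
    have hdisj : Disjoint (P ∩ Q) (P \ Q) := by
      rw [Set.disjoint_left]
      rintro z ⟨_, hzQ⟩ ⟨_, hz2⟩
      exact hz2 hzQ
    have e1 : Jen N α P P = Jen N α (P ∩ Q) P + Jen N α (P \ Q) P := by
      calc Jen N α P P = Jen N α ((P ∩ Q) ∪ (P \ Q)) P := by rw [Set.inter_union_diff]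
        _ = Jen N α (P ∩ Q) P + Jen N α (P \ Q) P :=
            Jen_split_left N α (hmP.diff hmQ) hdisj
    have e2 : Jen N α (P ∩ Q) P = Jen N α (P ∩ Q) (P ∩ Q) + Jen N α (P ∩ Q) (P \ Q) := by
      calc Jen N α (P ∩ Q) P = Jen N α (P ∩ Q) ((P ∩ Q) ∪ (P \ Q)) := by
            rw [Set.inter_union_diff]
        _ = Jen N α (P ∩ Q) (P ∩ Q) + Jen N α (P ∩ Q) (P \ Q) :=
            Jen_split_right N α (hmP.diff hmQ) hdisj
    have b1 : Jen N α (P ∩ Q) (P ∩ Q) ≤ Jen N α Q Q :=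
      Jen_mono N α inter_subset_right inter_subset_right
    have b2 : Jen N α (P ∩ Q) (P \ Q) ≤ Cenn * volume (P \ Q) := by
      rw [Jen_swap]
      exact hJle (P \ Q) (P ∩ Q) (hmP.inter hmQ) ((inter_subset_left).trans hPsub)
    have b3 : Jen N α (P \ Q) P ≤ Cenn * volume (P \ Q) := hJle (P \ Q) P hmP hPsub
    calc Jen N α P P = Jen N α (P ∩ Q) (P ∩ Q) + Jen N α (P ∩ Q) (P \ Q)
          + Jen N α (P \ Q) P := by rw [e1, e2]
      _ ≤ Jen N α Q Q + Cenn * volume (P \ Q) + Cenn * volume (P \ Q) :=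
          add_le_add (add_le_add b1 b2) b3
  -- finiteness facts
  have hvolD : volume (symmDiff E F) ≤ ENNReal.ofReal (2 * m) :=
    (measure_mono symmDiff_subset_union).trans hGvol
  have hSfin : Cenn * volume (symmDiff E F) ≠ ⊤ :=
    ENNReal.mul_ne_top hCtop (hvolD.trans_lt ENNReal.ofReal_lt_top).ne
  have hJEfin : Jen N α E E ≠ ⊤ :=
    ((hJle E E hmE subset_union_left).trans_lt
      (ENNReal.mul_lt_top (lt_top_iff_ne_top.mpr hCtop)
        (hE.trans_lt ENNReal.ofReal_lt_top))).ne
  have hJFfin : Jen N α F F ≠ ⊤ :=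
    ((hJle F F hmF subset_union_right).trans_lt
      (ENNReal.mul_lt_top (lt_top_iff_ne_top.mpr hCtop)
        (hF.trans_lt ENNReal.ofReal_lt_top))).ne
  have hsd : ∀ P Q : Set (EuclideanSpace ℝ (Fin N)), P \ Q ⊆ symmDiff E F →
      Cenn * volume (P \ Q) ≤ Cenn * volume (symmDiff E F) := by
    intro P Q hsub
    exact mul_le_mul_right (measure_mono hsub) _
  have hEFD : E \ F ⊆ symmDiff E F := by
    rw [Set.symmDiff_def]; exact subset_union_left
  have hFED : F \ E ⊆ symmDiff E F := by
    rw [Set.symmDiff_def]; exact subset_union_right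
  -- combine
  have hside : ∀ P Q : Set (EuclideanSpace ℝ (Fin N)), MeasurableSet P → MeasurableSet Q →
      P ∪ Q = E ∪ F → P \ Q ⊆ symmDiff E F → Jen N α Q Q ≠ ⊤ →
      (Jen N α P P).toReal - (Jen N α Q Q).toReal
        ≤ 2 * Cenn.toReal * (volume (symmDiff E F)).toReal := by
    intro P Q hmP hmQ hPQ hDsub hQfin
    have h := (main P Q hmP hmQ hPQ).trans
      (add_le_add (add_le_add le_rfl (hsd P Q hDsub)) (hsd P Q hDsub))
    have hrfin : Jen N α Q Q + Cenn * volume (symmDiff E F) + Cenn * volume (symmDiff E F) ≠ ⊤ :=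
      ENNReal.add_ne_top.mpr ⟨ENNReal.add_ne_top.mpr ⟨hQfin, hSfin⟩, hSfin⟩
    have h' := ENNReal.toReal_mono hrfin h
    rw [ENNReal.toReal_add (ENNReal.add_ne_top.mpr ⟨hQfin, hSfin⟩) hSfin,
      ENNReal.toReal_add hQfin hSfin, ENNReal.toReal_mul] at h'
    linarith
  have hEF := hside E F hmE hmF rfl hEFD hJFfin
  have hFE := hside F E hmF hmE (Set.union_comm F E) hFED hJEfin
  rw [hNL E hmE hE, hNL F hmF hF, abs_sub_le_iff]
  exact ⟨hEF, hFE⟩
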